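/- Let R be a relational doctrine with quotients on a category C. Then R is balanced if and only if every surjective arrow of C is a quotient arrow of some R-equivalence relation. -/

import Mathlib

/-!
For a surjective `f`, take the effective descent quotient `q` of the kernel of `f`; then `f`
factors as `q ≫ h`, and effectiveness plus descent of `q` make `h` injective while surjectivity
of `f` passes to `h`. In a balanced doctrine `h` is an isomorphism, so `f` is again a quotient
arrow of its kernel. Conversely, an injective quotient arrow `f` of `ρ` has `ρ ≤ d`, so the
identity factors through `f`, giving a retraction which the uniqueness of factorisations
through `f` turns into an inverse.
-/

open CategoryTheory

universe w w' v v' u u'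

/-- A relational doctrine on a category `C` with fibres `P X Y` (posets):
a contravariant functor `(C^op × C^op) → Pos` with identities, composition and converse. -/
structure RelDoctrine (C : Type u) [Category.{v} C] (P : C → C → Type w)
    [∀ X Y : C, PartialOrder (P X Y)] where
  reidx : ∀ {A X B Y : C}, (A ⟶ X) → (B ⟶ Y) → P X Y → P A B
  reidx_mono : ∀ {A X B Y : C} (f : A ⟶ X) (g : B ⟶ Y), Monotone (reidx f g)
  reidx_id : ∀ {X Y : C} (α : P X Y), reidx (𝟙 X) (𝟙 Y) α = α
  reidx_comp :
    ∀ {A X X' B Y Y' : C} (f : A ⟶ X) (f' : X ⟶ X') (g : B ⟶ Y) (g' : Y ⟶ Y') (α : P X' Y'),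
      reidx (f ≫ f') (g ≫ g') α = reidx f g (reidx f' g' α)
  d : ∀ X : C, P X X
  comp : ∀ {X Y Z : C}, P X Y → P Y Z → P X Z
  comp_mono : ∀ {X Y Z : C} {α α' : P X Y} {β β' : P Y Z},
      α ≤ α' → β ≤ β' → comp α β ≤ comp α' β'
  conv : ∀ {X Y : C}, P X Y → P Y X
  conv_mono : ∀ {X Y : C} {α α' : P X Y}, α ≤ α' → conv α ≤ conv α'
  d_le_reidx : ∀ {X Y : C} (f : X ⟶ Y), d X ≤ reidx f f (d Y)
  comp_reidx_le : ∀ {X A Y B Z W : C} (f : X ⟶ A) (g : Y ⟶ B) (h : Z ⟶ W)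
      (α : P A B) (β : P B W),
      comp (reidx f g α) (reidx g h β) ≤ reidx f h (comp α β)
  conv_reidx_le : ∀ {X A Y B : C} (f : X ⟶ A) (g : Y ⟶ B) (α : P A B),
      conv (reidx f g α) ≤ reidx g f (conv α)
  comp_assoc : ∀ {X Y Z W : C} (α : P X Y) (β : P Y Z) (γ : P Z W),
      comp α (comp β γ) = comp (comp α β) γ
  d_comp : ∀ {X Y : C} (α : P X Y), comp (d X) α = α
  comp_d : ∀ {X Y : C} (α : P X Y), comp α (d Y) = α
  conv_comp : ∀ {X Y Z : C} (α : P X Y) (β : P Y Z),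
      conv (comp α β) = comp (conv β) (conv α)
  conv_d : ∀ X : C, conv (d X) = d X
  conv_conv : ∀ {X Y : C} (α : P X Y), conv (conv α) = α

namespace RelDoctrine

variable {C : Type u} [Category.{v} C] {P : C → C → Type w} [∀ X Y : C, PartialOrder (P X Y)]

/-- The graph of an arrow `f : X ⟶ Y` is `R(f, id_Y)(d_Y)`. -/
def gr (D : RelDoctrine C P) {X Y : C} (f : X ⟶ Y) : P X Y :=
  D.reidx f (𝟙 Y) (D.d Y)

/-- `α` is functional: `α° ; α ≤ d_Y`. -/
def Functional (D : RelDoctrine C P) {X Y : C} (α : P X Y) : Prop :=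
  D.comp (D.conv α) α ≤ D.d Y

/-- `α` is total: `d_X ≤ α ; α°`. -/
def Total (D : RelDoctrine C P) {X Y : C} (α : P X Y) : Prop :=
  D.d X ≤ D.comp α (D.conv α)

/-- `α` is injective: `α ; α° ≤ d_X`. -/
def InjectiveRel (D : RelDoctrine C P) {X Y : C} (α : P X Y) : Prop :=
  D.comp α (D.conv α) ≤ D.d X

/-- `α` is surjective: `d_Y ≤ α° ; α`. -/
def SurjectiveRel (D : RelDoctrine C P) {X Y : C} (α : P X Y) : Prop :=
  D.d Y ≤ D.comp (D.conv α) α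

/-- The kernel of an arrow `f` is `gr(f) ; gr(f)°`. -/
def kernelOf (D : RelDoctrine C P) {X Y : C} (f : X ⟶ Y) : P X X :=
  D.comp (D.gr f) (D.conv (D.gr f))

/-- An `R`-equivalence relation: reflexive, symmetric, transitive. -/
def IsEquivRel (D : RelDoctrine C P) {X : C} (ρ : P X X) : Prop :=
  D.d X ≤ ρ ∧ D.conv ρ ≤ ρ ∧ D.comp ρ ρ ≤ ρ

/-- `q : X ⟶ W` is a quotient arrow of the equivalence relation `ρ` on `X`. -/
def IsQuotientArrow (D : RelDoctrine C P) {X W : C} (ρ : P X X) (q : X ⟶ W) : Prop :=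
  ρ ≤ D.kernelOf q ∧
    ∀ (Z : C) (f : X ⟶ Z), ρ ≤ D.kernelOf f → ∃! h : W ⟶ Z, f = q ≫ h

/-- The quotient arrow `q` of `ρ` is effective: `ρ = gr(q) ; gr(q)°`. -/
def Effective (D : RelDoctrine C P) {X W : C} (ρ : P X X) (q : X ⟶ W) : Prop :=
  ρ = D.kernelOf q

/-- The arrow `q` is descent: `d_W ≤ gr(q)° ; gr(q)`. -/
def Descent (D : RelDoctrine C P) {X W : C} (q : X ⟶ W) : Prop :=
  D.d W ≤ D.comp (D.conv (D.gr q)) (D.gr q)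

/-- `D` has quotients: every equivalence relation admits an effective descent quotient arrow. -/
def HasQuotients (D : RelDoctrine C P) : Prop :=
  ∀ (X : C) (ρ : P X X), D.IsEquivRel ρ →
    ∃ (W : C) (q : X ⟶ W), D.IsQuotientArrow ρ q ∧ D.Effective ρ q ∧ D.Descent q

/-- `f ≐ g` : the arrows `f, g` are `R`-equal, i.e. `d_X ≤ R(f,g)(d_Y)`. -/
def RExtEq (D : RelDoctrine C P) {X Y : C} (f g : X ⟶ Y) : Prop :=
  D.d X ≤ D.reidx f g (D.d Y)

/-- `D` is extensional: `R`-equal arrows are equal. -/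
def Extensional (D : RelDoctrine C P) : Prop :=
  ∀ (X Y : C) (f g : X ⟶ Y), D.RExtEq f g → f = g

/-- `D` is balanced: every bijective arrow is an isomorphism. -/
def BalancedDoc (D : RelDoctrine C P) : Prop :=
  ∀ (X Y : C) (f : X ⟶ Y), D.InjectiveRel (D.gr f) → D.SurjectiveRel (D.gr f) → IsIso f

/-- `Q` is `R`-projective with respect to quotient arrows. -/
def ProjectiveObj (D : RelDoctrine C P) (Q : C) : Prop :=
  ∀ (X Y : C) (f : Q ⟶ Y) (q : X ⟶ Y) (ρ : P X X),
    D.IsEquivRel ρ → D.IsQuotientArrow ρ q → ∃ h : Q ⟶ X, f = h ≫ q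

/-- Descent data with respect to equivalence relations `ρ` and `σ` : `ρ° ; α ; σ ≤ α`. -/
def Des (D : RelDoctrine C P) {X Y : C} (ρ : P X X) (σ : P Y Y) (α : P X Y) : Prop :=
  D.comp (D.comp (D.conv ρ) α) σ ≤ α

/-- The rule of unique choice: every functional total relation contains the graph of an arrow. -/
def RUC (D : RelDoctrine C P) : Prop :=
  ∀ (X Y : C) (α : P X Y), D.Functional α → D.Total α → ∃ f : X ⟶ Y, D.gr f ≤ α

end RelDoctrine

variable {C : Type u} [Category.{v} C] {P : C → C → Type w} [∀ X Y : C, PartialOrder (P X Y)]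

namespace RelDoctrine

variable (D : RelDoctrine C P)

local infixl:70 " ⨾ " => D.comp
local postfix:max "°" => D.conv

lemma conv_reidx {X A Y B : C} (f : X ⟶ A) (g : Y ⟶ B) (α : P A B) :
    (D.reidx f g α)° = D.reidx g f α° := by
  refine le_antisymm (D.conv_reidx_le f g α) ?_
  simpa only [D.conv_conv] using D.conv_mono (D.conv_reidx_le g f α°)

lemma conv_gr {X Y : C} (f : X ⟶ Y) : (D.gr f)° = D.reidx (𝟙 Y) f (D.d Y) := by
  rw [gr, conv_reidx, D.conv_d]

lemma conv_gr_comp_reidx_le {X Y B : C} (f : X ⟶ Y) (β : P Y B) :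
    (D.gr f)° ⨾ D.reidx f (𝟙 B) β ≤ β := by
  simpa only [conv_gr, D.d_comp, D.reidx_id] using D.comp_reidx_le (𝟙 Y) f (𝟙 B) (D.d Y) β

lemma gr_functional {X Y : C} (f : X ⟶ Y) : D.Functional (D.gr f) :=
  D.conv_gr_comp_reidx_le f (D.d Y)

lemma gr_total {X Y : C} (f : X ⟶ Y) : D.Total (D.gr f) := by
  have hgr : D.d X ≤ D.reidx (𝟙 X) f (D.gr f) := by
    simpa only [gr, ← D.reidx_comp, Category.id_comp, Category.comp_id] using D.d_le_reidx f
  have hconv : D.d X ≤ D.reidx f (𝟙 X) (D.gr f)° := by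
    simpa only [conv_gr, ← D.reidx_comp, Category.id_comp, Category.comp_id]
      using D.d_le_reidx f
  calc D.d X = D.d X ⨾ D.d X := (D.d_comp _).symm
    _ ≤ D.reidx (𝟙 X) f (D.gr f) ⨾ D.reidx f (𝟙 X) (D.gr f)° := D.comp_mono hgr hconv
    _ ≤ D.reidx (𝟙 X) (𝟙 X) (D.gr f ⨾ (D.gr f)°) := D.comp_reidx_le _ _ _ _ _
    _ = D.gr f ⨾ (D.gr f)° := D.reidx_id _

lemma reidx_id_right_eq_gr_comp {X Y B : C} (f : X ⟶ Y) (β : P Y B) :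
    D.reidx f (𝟙 B) β = D.gr f ⨾ β := by
  refine le_antisymm ?_ ?_
  · calc D.reidx f (𝟙 B) β = D.d X ⨾ D.reidx f (𝟙 B) β := (D.d_comp _).symm
      _ ≤ (D.gr f ⨾ (D.gr f)°) ⨾ D.reidx f (𝟙 B) β := D.comp_mono (D.gr_total f) le_rfl
      _ = D.gr f ⨾ ((D.gr f)° ⨾ D.reidx f (𝟙 B) β) := (D.comp_assoc _ _ _).symm
      _ ≤ D.gr f ⨾ β := D.comp_mono le_rfl (D.conv_gr_comp_reidx_le f β)
  · simpa only [gr, D.reidx_id, D.d_comp] using D.comp_reidx_le f (𝟙 Y) (𝟙 B) (D.d Y) β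

lemma gr_id (X : C) : D.gr (𝟙 X) = D.d X := D.reidx_id _

lemma gr_comp {X Y Z : C} (f : X ⟶ Y) (g : Y ⟶ Z) : D.gr (f ≫ g) = D.gr f ⨾ D.gr g := by
  rw [← reidx_id_right_eq_gr_comp, gr, gr, ← D.reidx_comp, Category.comp_id]

lemma kernelOf_id (X : C) : D.kernelOf (𝟙 X) = D.d X := by
  rw [kernelOf, gr_id, D.conv_d, D.d_comp]

lemma kernelOf_le_kernelOf_comp {X Y Z : C} (f : X ⟶ Y) (g : Y ⟶ Z) :
    D.kernelOf f ≤ D.kernelOf (f ≫ g) := by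
  calc D.kernelOf f = D.gr f ⨾ D.d Y ⨾ (D.gr f)° := by rw [kernelOf, D.comp_d]
    _ ≤ D.gr f ⨾ (D.gr g ⨾ (D.gr g)°) ⨾ (D.gr f)° :=
        D.comp_mono (D.comp_mono le_rfl (D.gr_total g)) le_rfl
    _ = D.kernelOf (f ≫ g) := by simp only [kernelOf, gr_comp, D.conv_comp, D.comp_assoc]

lemma isEquivRel_kernelOf {X Y : C} (f : X ⟶ Y) : D.IsEquivRel (D.kernelOf f) := by
  refine ⟨D.gr_total f, by rw [kernelOf, D.conv_comp, D.conv_conv], ?_⟩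
  calc D.kernelOf f ⨾ D.kernelOf f = D.gr f ⨾ ((D.gr f)° ⨾ D.gr f) ⨾ (D.gr f)° := by
        simp only [kernelOf, D.comp_assoc]
    _ ≤ D.gr f ⨾ D.d Y ⨾ (D.gr f)° :=
        D.comp_mono (D.comp_mono le_rfl (D.gr_functional f)) le_rfl
    _ = D.kernelOf f := by rw [kernelOf, D.comp_d]

lemma injectiveRel_gr_of_kernelOf_comp_le {X W Y : C} {q : X ⟶ W} (hq : D.Descent q)
    (h : W ⟶ Y) (hker : D.kernelOf (q ≫ h) ≤ D.kernelOf q) : D.InjectiveRel (D.gr h) := by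
  set a := D.gr q
  set b := D.gr h
  calc b ⨾ b° = D.d W ⨾ (b ⨾ b°) ⨾ D.d W := by rw [D.comp_d, D.d_comp]
    _ ≤ (a° ⨾ a) ⨾ (b ⨾ b°) ⨾ (a° ⨾ a) := D.comp_mono (D.comp_mono hq le_rfl) hq
    _ = a° ⨾ D.kernelOf (q ≫ h) ⨾ a := by
        simp only [a, b, kernelOf, gr_comp, D.conv_comp, D.comp_assoc]
    _ ≤ a° ⨾ D.kernelOf q ⨾ a := D.comp_mono (D.comp_mono le_rfl hker) le_rfl
    _ = (a° ⨾ a) ⨾ (a° ⨾ a) := by simp only [a, kernelOf, D.comp_assoc]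
    _ ≤ D.d W ⨾ D.d W := D.comp_mono (D.gr_functional q) (D.gr_functional q)
    _ = D.d W := D.d_comp _

lemma surjectiveRel_gr_of_comp {X W Y : C} (q : X ⟶ W) (h : W ⟶ Y)
    (hqh : D.SurjectiveRel (D.gr (q ≫ h))) : D.SurjectiveRel (D.gr h) := by
  calc D.d Y ≤ (D.gr (q ≫ h))° ⨾ D.gr (q ≫ h) := hqh
    _ = (D.gr h)° ⨾ ((D.gr q)° ⨾ D.gr q) ⨾ D.gr h := by
        simp only [gr_comp, D.conv_comp, D.comp_assoc]
    _ ≤ (D.gr h)° ⨾ D.d W ⨾ D.gr h :=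
        D.comp_mono (D.comp_mono le_rfl (D.gr_functional q)) le_rfl
    _ = (D.gr h)° ⨾ D.gr h := by rw [D.comp_d]

variable {D} in
lemma IsQuotientArrow.comp_isIso {X W V : C} {ρ : P X X} {q : X ⟶ W}
    (hq : D.IsQuotientArrow ρ q) (h : W ⟶ V) [IsIso h] : D.IsQuotientArrow ρ (q ≫ h) := by
  refine ⟨hq.1.trans (D.kernelOf_le_kernelOf_comp q h), fun Z g hg => ?_⟩
  obtain ⟨k, rfl, hk⟩ := hq.2 Z g hg
  refine ⟨inv h ≫ k, by simp, fun k' hk' => ?_⟩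
  rw [← hk (h ≫ k') (by simpa using hk'), IsIso.inv_hom_id_assoc]

lemma isIso_of_injectiveRel_of_isQuotientArrow {X Y : C} {ρ : P X X} {f : X ⟶ Y}
    (hinj : D.InjectiveRel (D.gr f)) (hf : D.IsQuotientArrow ρ f) : IsIso f := by
  obtain ⟨g, hfg, -⟩ := hf.2 X (𝟙 X) (by rw [kernelOf_id]; exact hf.1.trans hinj)
  obtain ⟨_, -, hunique⟩ := hf.2 Y f hf.1
  have hgf : g ≫ f = 𝟙 Y :=
    (hunique _ (show f = f ≫ g ≫ f by rw [← Category.assoc, ← hfg, Category.id_comp])).trans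
      (hunique _ (Category.comp_id f).symm).symm
  exact ⟨g, hfg.symm, hgf⟩

end RelDoctrine

/-- A relational doctrine with quotients is balanced iff every surjective arrow is a
quotient arrow of some equivalence relation. -/
theorem statement5 (D : RelDoctrine C P) (hquot : D.HasQuotients) :
    D.BalancedDoc ↔
      ∀ (X Y : C) (f : X ⟶ Y), D.SurjectiveRel (D.gr f) →
        ∃ ρ : P X X, D.IsEquivRel ρ ∧ D.IsQuotientArrow ρ f := by
  constructor
  · intro hbal X Y f hsurj
    obtain ⟨W, q, hq, heff, hdes⟩ := hquot X (D.kernelOf f) (D.isEquivRel_kernelOf f)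
    obtain ⟨h, rfl, -⟩ := hq.2 Y f le_rfl
    have : IsIso h := hbal W Y h (D.injectiveRel_gr_of_kernelOf_comp_le hdes h heff.le)
      (D.surjectiveRel_gr_of_comp q h hsurj)
    exact ⟨_, D.isEquivRel_kernelOf _, hq.comp_isIso h⟩
  · intro hquotArrow X Y f hinj hsurj
    obtain ⟨ρ, -, hf⟩ := hquotArrow X Y f hsurj
    exact D.isIso_of_injectiveRel_of_isQuotientArrow hinj hf
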